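/- arXiv:1808.00715 — 5 statements merged into one kernel-verified Lean document; each statement's English description precedes it below -/
import Mathlib

section
/- Let M be a complete metric space. If M has property (Z), then M is a length space; that is, for every pair of points x, y ∈ M and every δ > 0 there exists z ∈ M such that max(d(x,z), d(z,y)) ≤ d(x,y)/2 + δ. -/
/-- A metric space has property (Z) if for every pair of distinct points `x, y`
and every `ε > 0` there is `z ∉ {x, y}` with
`d(x,z) + d(z,y) ≤ d(x,y) + ε * min (d(x,z)) (d(z,y))`. -/
def PropertyZ (M : Type*) [MetricSpace M] : Prop :=
  ∀ x y : M, x ≠ y → ∀ ε : ℝ, 0 < ε →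
    ∃ z : M, z ≠ x ∧ z ≠ y ∧
      dist x z + dist z y ≤ dist x y + ε * min (dist x z) (dist z y)

/-- A complete metric space is a length space if for all `x, y` and `δ > 0`
there is `z` with `max (d(x,z)) (d(z,y)) ≤ d(x,y)/2 + δ`. -/
def IsLengthSpace (M : Type*) [MetricSpace M] : Prop :=
  ∀ x y : M, ∀ δ : ℝ, 0 < δ →
    ∃ z : M, max (dist x z) (dist z y) ≤ dist x y / 2 + δ

/-- An Ekeland-type minimal point theorem: in a nonempty complete metric space,
a continuous function bounded below admits a point `s` such that no other point
`w` satisfies `f w + (1/2) * dist w s ≤ f s`. -/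
theorem ekeland_min_point {X : Type*} [MetricSpace X] [CompleteSpace X] [Nonempty X]
    (f : X → ℝ) (hf : Continuous f) (c : ℝ) (hc : ∀ x, c ≤ f x) :
    ∃ s : X, ∀ w : X, f w + (1/2) * dist w s ≤ f s → w = s := by
  classical
  -- one step of the construction
  have key : ∀ (s : X) (n : ℕ), ∃ t : X,
      (f t + (1/2) * dist t s ≤ f s) ∧
      (∀ w, f w + (1/2) * dist w s ≤ f s → f t ≤ f w + (1/2)^n) := by
    intro s n
    set S : Set X := {w | f w + (1/2) * dist w s ≤ f s} with hS
    have hsS : s ∈ S := by simp [hS]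
    have hne : (f '' S).Nonempty := ⟨f s, s, hsS, rfl⟩
    have hbdd : BddBelow (f '' S) := ⟨c, by rintro _ ⟨w, _, rfl⟩; exact hc w⟩
    obtain ⟨r, ⟨t, htS, rfl⟩, hr⟩ :=
      Real.lt_sInf_add_pos hne (by positivity : (0:ℝ) < (1/2)^n)
    refine ⟨t, htS, fun w hw => ?_⟩
    have : sInf (f '' S) ≤ f w := csInf_le hbdd ⟨w, hw, rfl⟩
    linarith
  choose next h1 h2 using key
  set seq : ℕ → X := fun n => Nat.rec (Classical.arbitrary X) (fun n s => next s n) n with hseqdef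
  have hseq : ∀ n, seq (n+1) = next (seq n) n := fun n => rfl
  -- chain inequality
  have chain : ∀ n m, n ≤ m → f (seq m) + (1/2) * dist (seq m) (seq n) ≤ f (seq n) := by
    intro n m hnm
    induction m, hnm using Nat.le_induction with
    | base => simp
    | succ m hnm ih =>
      have h := h1 (seq m) m
      rw [← hseq m] at h
      have htri : dist (seq (m+1)) (seq n) ≤ dist (seq (m+1)) (seq m) + dist (seq m) (seq n) :=
        dist_triangle _ _ _
      nlinarith
  have hmono : ∀ n m, n ≤ m → f (seq m) ≤ f (seq n) := by
    intro n m h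
    have := chain n m h
    have := dist_nonneg (x := seq m) (y := seq n)
    linarith
  have hbddr : BddBelow (Set.range fun n => f (seq n)) := ⟨c, by rintro _ ⟨n, rfl⟩; exact hc _⟩
  set L : ℝ := ⨅ n, f (seq n) with hL
  have hLle : ∀ n, L ≤ f (seq n) := fun n => ciInf_le hbddr n
  have htendL : Filter.Tendsto (fun n => f (seq n)) Filter.atTop (nhds L) :=
    tendsto_atTop_ciInf (fun a b hab => hmono a b hab) hbddr
  -- the sequence is Cauchy
  have hcauchy : CauchySeq seq := by
    apply cauchySeq_of_le_tendsto_0 (b := fun N => 4 * (f (seq N) - L))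
    · intro n m N hn hm
      have c1 := chain N n hn
      have c2 := chain N m hm
      have hL1 := hLle n
      have hL2 := hLle m
      have htri : dist (seq n) (seq m) ≤ dist (seq n) (seq N) + dist (seq N) (seq m) :=
        dist_triangle _ _ _
      rw [dist_comm (seq N) (seq m)] at htri
      linarith
    · have : Filter.Tendsto (fun N => 4 * (f (seq N) - L)) Filter.atTop (nhds (4 * (L - L))) :=
        (htendL.sub tendsto_const_nhds).const_mul 4
      simpa using this
  obtain ⟨s, hs⟩ := cauchySeq_tendsto_of_complete hcauchy
  -- s is below every seq n in the Ekeland order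
  have hsn : ∀ n, f s + (1/2) * dist s (seq n) ≤ f (seq n) := by
    intro n
    have htend : Filter.Tendsto (fun m => f (seq m) + (1/2) * dist (seq m) (seq n))
        Filter.atTop (nhds (f s + (1/2) * dist s (seq n))) := by
      exact ((hf.tendsto s).comp hs).add
        ((((continuous_id.dist continuous_const).tendsto s).comp hs).const_mul (1/2))
    refine le_of_tendsto htend ?_
    filter_upwards [Filter.eventually_ge_atTop n] with m hm
    exact chain n m hm
  refine ⟨s, fun w hw => ?_⟩
  -- transitivity: w is below every seq n
  have hwn : ∀ n, f w + (1/2) * dist w (seq n) ≤ f (seq n) := by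
    intro n
    have htri : dist w (seq n) ≤ dist w s + dist s (seq n) := dist_triangle _ _ _
    have := hsn n
    nlinarith
  have hgap : ∀ n : ℕ, (1/2) * dist w (seq (n+1)) ≤ (1/2)^n := by
    intro n
    have h2' := h2 (seq n) n w (hwn n)
    rw [← hseq n] at h2'
    have := hwn (n+1)
    linarith
  -- conclude dist w s = 0
  have hd : dist w s ≤ 0 := by
    have hb : ∀ n : ℕ, dist w s ≤ 2 * (1/2)^n + dist (seq (n+1)) s := by
      intro n
      have htri : dist w s ≤ dist w (seq (n+1)) + dist (seq (n+1)) s := dist_triangle _ _ _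
      have := hgap n
      linarith
    have htend : Filter.Tendsto (fun n : ℕ => 2 * (1/2)^n + dist (seq (n+1)) s)
        Filter.atTop (nhds (2 * 0 + 0)) := by
      refine Filter.Tendsto.add ?_ ?_
      · exact (tendsto_pow_atTop_nhds_zero_of_lt_one (by norm_num) (by norm_num)).const_mul 2
      · have h' : Filter.Tendsto (fun n : ℕ => seq (n+1)) Filter.atTop (nhds s) :=
          hs.comp (Filter.tendsto_add_atTop_nat 1)
        simpa using h'.dist (tendsto_const_nhds : Filter.Tendsto (fun _ : ℕ => s) Filter.atTop (nhds s))
    have := ge_of_tendsto htend (Filter.Eventually.of_forall hb)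
    simpa using this
  exact dist_le_zero.mp hd

set_option maxHeartbeats 1000000 in
/-- Every complete metric space with property (Z) is a length space. -/
theorem propertyZ_implies_length (M : Type*) [MetricSpace M] [CompleteSpace M]
    (hZ : PropertyZ M) : IsLengthSpace M := by
  intro x y δ hδ
  by_cases hxy : x = y
  · exact ⟨x, by simp [hxy, dist_comm] ; positivity⟩
  have hd : 0 < dist x y := dist_pos.mpr hxy
  set d : ℝ := dist x y with hddef
  -- reduce to small δ
  set δ' : ℝ := min δ (d/2) with hδ'def
  have hδ'pos : 0 < δ' := lt_min hδ (by linarith)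
  have hδ'le : δ' ≤ δ := min_le_left _ _
  have hδ'd : δ' ≤ d/2 := min_le_right _ _
  suffices h : ∃ z : M, max (dist x z) (dist z y) ≤ d / 2 + δ' by
    obtain ⟨z, hz⟩ := h
    exact ⟨z, hz.trans (by linarith)⟩
  set ρ : ℝ := δ' / d with hρdef
  have hρpos : 0 < ρ := div_pos hδ'pos hd
  have hρd : ρ * d = δ' := by
    rw [hρdef]; field_simp
  have hρhalf : ρ ≤ 1/2 := by
    rw [hρdef, div_le_iff₀ hd]; linarith
  -- the constraint set
  set C : Set (M × M) := {p | dist x p.1 ≤ d/2 + δ' ∧ dist p.2 y ≤ d/2 + δ' ∧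
      dist x p.1 + dist p.1 p.2 + dist p.2 y + ρ * dist p.1 p.2 ≤ d + δ'} with hCdef
  have hCclosed : IsClosed C := by
    apply IsClosed.inter
    · exact isClosed_le ((continuous_const.dist continuous_fst)) continuous_const
    · apply IsClosed.inter
      · exact isClosed_le ((continuous_snd.dist continuous_const)) continuous_const
      · exact isClosed_le
          ((((continuous_const.dist continuous_fst).add
            (continuous_fst.dist continuous_snd)).add
            (continuous_snd.dist continuous_const)).add
            (continuous_const.mul (continuous_fst.dist continuous_snd))) continuous_const
  have hxyC : (x, y) ∈ C := by
    refine ⟨?_, ?_, ?_⟩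
    · show dist x x ≤ d/2 + δ'
      rw [dist_self]; positivity
    · show dist y y ≤ d/2 + δ'
      rw [dist_self]; positivity
    · show dist x x + dist x y + dist y y + ρ * dist x y ≤ d + δ'
      rw [dist_self, dist_self, ← hddef]
      linarith [hρd]
  haveI : CompleteSpace C := hCclosed.completeSpace_coe
  haveI : Nonempty C := ⟨⟨(x, y), hxyC⟩⟩
  -- apply the Ekeland-type lemma to f = distance between the pair
  obtain ⟨⟨⟨u, v⟩, hu, hv, hsum⟩, hmin⟩ :=
    ekeland_min_point (X := C) (fun p => dist (p : M × M).1 (p : M × M).2)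
      (continuous_subtype_val.fst.dist continuous_subtype_val.snd) 0 (fun p => dist_nonneg)
  by_cases huv : u = v
  · exact ⟨u, max_le (le_trans (le_of_eq rfl) hu) (by rw [huv]; exact hv)⟩
  -- otherwise apply property (Z) and contradict minimality
  exfalso
  set ε : ℝ := ρ / 2 with hεdef
  have hεpos : 0 < ε := by positivity
  obtain ⟨z, hzu, hzv, hzd⟩ := hZ u v huv ε hεpos
  set a : ℝ := dist u z with hadef
  set b : ℝ := dist z v with hbdef
  set cc : ℝ := dist u v with hccdef
  have ha : 0 < a := dist_pos.mpr (fun h => hzu h.symm)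
  have hb : 0 < b := dist_pos.mpr hzv
  have hcc : 0 < cc := dist_pos.mpr huv
  have hmle_a : min a b ≤ a := min_le_left _ _
  have hmle_b : min a b ≤ b := min_le_right _ _
  have hmnn : 0 ≤ min a b := le_min ha.le hb.le
  have hab : a + b ≤ cc + ε * min a b := by
    rw [hadef, hbdef, hccdef]; exact hzd
  have hεle : ε ≤ 1/4 := by rw [hεdef]; linarith
  have hεm_m : ε * min a b ≤ min a b := by
    rw [hεdef]; exact mul_le_of_le_one_left hmnn (by linarith)
  have hm_cc : min a b ≤ cc := by linarith only [hεm_m, hab, hmle_a, hmle_b]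
  have hεa : ε * min a b ≤ (ρ/2) * a := by
    rw [hεdef]; exact mul_le_mul_of_nonneg_left hmle_a (by positivity)
  have hεb : ε * min a b ≤ (ρ/2) * b := by
    rw [hεdef]; exact mul_le_mul_of_nonneg_left hmle_b (by positivity)
  have hεcc : ε * min a b ≤ ρ * cc := by
    have h1 : ρ * min a b ≤ ρ * cc := mul_le_mul_of_nonneg_left hm_cc hρpos.le
    have h2 : 0 ≤ ρ * min a b := mul_nonneg hρpos.le hmnn
    rw [hεdef]; linarith only [h1, h2]
  have h1a : a + b ≤ cc + (ρ/2) * a := by linarith only [hab, hεa]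
  have h1b : a + b ≤ cc + (ρ/2) * b := by linarith only [hab, hεb]
  have h3a : ρ * (b - cc) ≤ ρ * ((ρ/2) * a - a) :=
    mul_le_mul_of_nonneg_left (by linarith only [h1a]) hρpos.le
  have h3b : ρ * (a - cc) ≤ ρ * ((ρ/2) * b - b) :=
    mul_le_mul_of_nonneg_left (by linarith only [h1b]) hρpos.le
  have h5a : ρ * ρ * a ≤ ρ * a := by
    nlinarith [mul_nonneg (mul_nonneg hρpos.le ha.le) (by linarith : (0:ℝ) ≤ 1 - ρ)]
  have h5b : ρ * ρ * b ≤ ρ * b := by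
    nlinarith [mul_nonneg (mul_nonneg hρpos.le hb.le) (by linarith : (0:ℝ) ≤ 1 - ρ)]
  have hεa4 : ε * min a b ≤ (1/4) * a := by
    have h1 : ε * min a b ≤ ε * a := mul_le_mul_of_nonneg_left hmle_a hεpos.le
    have h2 : ε * a ≤ (1/4) * a := mul_le_mul_of_nonneg_right hεle ha.le
    linarith only [h1, h2]
  have hεb4 : ε * min a b ≤ (1/4) * b := by
    have h1 : ε * min a b ≤ ε * b := mul_le_mul_of_nonneg_left hmle_b hεpos.le
    have h2 : ε * b ≤ (1/4) * b := mul_le_mul_of_nonneg_right hεle hb.le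
    linarith only [h1, h2]
  -- dist x z + dist z y is small
  have hxz : dist x z ≤ dist x u + a := by rw [hadef]; exact dist_triangle x u z
  have hzy : dist z y ≤ b + dist v y := by rw [hbdef]; exact dist_triangle z v y
  have hsum' : dist x u + cc + dist v y + ρ * cc ≤ d + δ' := hsum
  have hsmall : dist x z + dist z y ≤ d + δ' := by linarith only [hxz, hzy, hab, hεcc, hsum']
  have hcase : dist x z ≤ d/2 + δ' ∨ dist z y ≤ d/2 + δ' := by
    rcases le_or_gt (dist x z) (d/2 + δ') with h | h
    · exact Or.inl h
    · right; linarith only [hsmall, h, hδ'pos]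
  rcases hcase with hcase | hcase
  · -- move the first coordinate to z
    have hwC : (z, v) ∈ C := by
      refine ⟨hcase, hv, ?_⟩
      show dist x z + dist z v + dist v y + ρ * dist z v ≤ d + δ'
      rw [← hbdef]
      linarith only [hxz, hsum', h1a, h3a, h5a]
    have hdist : dist (⟨(z,v), hwC⟩ : C) (⟨(u,v), hu, hv, hsum⟩ : C) = a := by
      rw [Subtype.dist_eq, Prod.dist_eq]
      show max (dist z u) (dist v v) = a
      rw [dist_self, max_eq_left dist_nonneg, dist_comm z u]
    have hord : dist z v + (1/2) * dist (⟨(z,v), hwC⟩ : C) (⟨(u,v), hu, hv, hsum⟩ : C)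
        ≤ dist u v := by
      rw [hdist, ← hbdef, ← hccdef]
      linarith only [hab, hεa4, ha]
    have heq := hmin ⟨(z,v), hwC⟩ hord
    exact hzu (congrArg (fun p : C => (p : M × M).1) heq)
  · -- move the second coordinate to z
    have hwC : (u, z) ∈ C := by
      refine ⟨hu, hcase, ?_⟩
      show dist x u + dist u z + dist z y + ρ * dist u z ≤ d + δ'
      rw [← hadef]
      linarith only [hzy, hsum', h1b, h3b, h5b]
    have hdist : dist (⟨(u,z), hwC⟩ : C) (⟨(u,v), hu, hv, hsum⟩ : C) = b := by
      rw [Subtype.dist_eq, Prod.dist_eq]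
      show max (dist u u) (dist z v) = b
      rw [dist_self, max_eq_right dist_nonneg]
    have hord : dist u z + (1/2) * dist (⟨(u,z), hwC⟩ : C) (⟨(u,v), hu, hv, hsum⟩ : C)
        ≤ dist u v := by
      rw [hdist, ← hadef, ← hccdef]
      linarith only [hab, hεb4, hb]
    have heq := hmin ⟨(u,z), hwC⟩ hord
    exact hzv (congrArg (fun p : C => (p : M × M).2) heq)
end

section
/- Every length space has property (Z); that is, if M is a complete metric space such that for every x, y ∈ M and every δ > 0 there exists z ∈ M with max(d(x,z), d(z,y)) ≤ d(x,y)/2 + δ, then for every pair of distinct points x, y ∈ M and every ε > 0 there exists z ∈ M \ {x, y} with d(x,z) + d(z,y) ≤ d(x,y) + ε·min(d(x,z), d(z,y)). -/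
/-- Every (complete) length space has property (Z). -/
theorem length_implies_propertyZ (M : Type*) [MetricSpace M] [CompleteSpace M]
    (hLen : ∀ x y : M, ∀ δ : ℝ, 0 < δ →
      ∃ z : M, max (dist x z) (dist z y) ≤ dist x y / 2 + δ) :
    ∀ x y : M, x ≠ y → ∀ ε : ℝ, 0 < ε →
      ∃ z : M, z ≠ x ∧ z ≠ y ∧
        dist x z + dist z y ≤ dist x y + ε * min (dist x z) (dist z y) := by
  intro x y hxy ε hε
  have hd : 0 < dist x y := dist_pos.mpr hxy
  set d := dist x y with hdd
  set δ : ℝ := min ε 1 * d / 12 with hδdef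
  have hmin : 0 < min ε 1 := lt_min hε one_pos
  have hδ : 0 < δ := by positivity
  have hδle : δ ≤ d / 12 := by
    have : min ε 1 ≤ 1 := min_le_right _ _
    rw [hδdef]
    nlinarith
  obtain ⟨z, hz⟩ := hLen x y δ hδ
  have h1 : dist x z ≤ d / 2 + δ := le_trans (le_max_left _ _) hz
  have h2 : dist z y ≤ d / 2 + δ := le_trans (le_max_right _ _) hz
  have htri : d ≤ dist x z + dist z y := dist_triangle x z y
  have hxz : d / 2 - δ ≤ dist x z := by linarith
  have hzy : d / 2 - δ ≤ dist z y := by linarith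
  have hxzpos : 0 < dist x z := by linarith
  have hzypos : 0 < dist z y := by linarith
  refine ⟨z, ?_, ?_, ?_⟩
  · intro h; rw [h] at hxzpos; simp at hxzpos
  · intro h; rw [h] at hzypos; simp at hzypos
  have hminz : d / 3 ≤ min (dist x z) (dist z y) := by
    apply le_min <;> linarith
  have h2δ : 2 * δ ≤ ε * (d / 3) := by
    have : min ε 1 ≤ ε := min_le_left _ _
    rw [hδdef]
    nlinarith
  have : ε * (d / 3) ≤ ε * min (dist x z) (dist z y) :=
    mul_le_mul_of_nonneg_left hminz hε.le
  linarith
end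

section
/- A complete metric space M is a length space if and only if it has property (Z). -/
set_option maxHeartbeats 1000000


section Aux

variable {M : Type*} [MetricSpace M]

/-- `z` is an `ε`-admissible intermediate point for the pair `(a, b)`. -/
def ZAdm (ε : ℝ) (a b z : M) : Prop :=
  z ≠ a ∧ z ≠ b ∧ dist a z + dist z b ≤ dist a b + ε * min (dist a z) (dist z b)

lemma zadm_min_pos {ε : ℝ} {a b z : M} (h : ZAdm ε a b z) :
    0 < min (dist a z) (dist z b) :=
  lt_min (dist_pos.2 (Ne.symm h.1)) (dist_pos.2 h.2.1)

lemma zadm_min_le_gap {ε : ℝ} (hε2 : ε ≤ 1/2) {a b z : M} (h : ZAdm ε a b z) :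
    min (dist a z) (dist z b) ≤ dist a b := by
  obtain ⟨_, _, h3⟩ := h
  have h4 : min (dist a z) (dist z b) ≤ dist a z := min_le_left _ _
  have h5 : min (dist a z) (dist z b) ≤ dist z b := min_le_right _ _
  have h0 : 0 ≤ min (dist a z) (dist z b) := le_min dist_nonneg dist_nonneg
  nlinarith [mul_le_mul_of_nonneg_right hε2 h0]

/-- From property (Z) one can pick an admissible point whose "min" is within a
factor 2 of the supremum over all admissible points. -/
lemma exists_nearmax (hZ : PropertyZ M) {ε : ℝ} (hε : 0 < ε) (hε2 : ε ≤ 1/2)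
    {a b : M} (hab : a ≠ b) :
    ∃ z, ZAdm ε a b z ∧
      ∀ w, ZAdm ε a b w →
        min (dist a w) (dist w b) ≤ 2 * min (dist a z) (dist z b) := by
  set S : Set ℝ := {m | ∃ z, ZAdm ε a b z ∧ m = min (dist a z) (dist z b)} with hS
  obtain ⟨z0, hz0⟩ := hZ a b hab ε hε
  have hz0' : ZAdm ε a b z0 := hz0
  have hne : S.Nonempty := ⟨_, z0, hz0', rfl⟩
  have hbdd : BddAbove S := by
    refine ⟨dist a b, fun m hm => ?_⟩
    obtain ⟨z, hz, rfl⟩ := hm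
    exact zadm_min_le_gap hε2 hz
  have hpos : 0 < sSup S := lt_of_lt_of_le (zadm_min_pos hz0') (le_csSup hbdd ⟨z0, hz0', rfl⟩)
  obtain ⟨m, hmS, hm⟩ := exists_lt_of_lt_csSup hne (half_lt_self hpos)
  obtain ⟨z, hz, rfl⟩ := hmS
  refine ⟨z, hz, fun w hw => ?_⟩
  have h1 : min (dist a w) (dist w b) ≤ sSup S := le_csSup hbdd ⟨w, hw, rfl⟩
  linarith

lemma propertyZ_to_length [CompleteSpace M] (hZ : PropertyZ M) : IsLengthSpace M := by
  classical
  intro x y δ hδ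
  by_cases hxy : x = y
  · subst hxy
    refine ⟨x, ?_⟩
    simp only [dist_self, max_self]
    positivity
  obtain ⟨d, hd, hdpos⟩ : ∃ d : ℝ, d = dist x y ∧ 0 < d :=
    ⟨dist x y, rfl, dist_pos.2 hxy⟩
  obtain ⟨ε, hε, hε2, h2ed⟩ : ∃ ε : ℝ, 0 < ε ∧ ε ≤ 1/2 ∧ 2 * ε * d ≤ δ := by
    refine ⟨min (1/2) (δ / (2 * d)), lt_min (by norm_num) (by positivity),
      min_le_left _ _, ?_⟩
    have h1 : min (1/2) (δ / (2 * d)) ≤ δ / (2 * d) := min_le_right _ _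
    have h2 : min (1/2) (δ / (2 * d)) * (2 * d) ≤ (δ / (2 * d)) * (2 * d) :=
      mul_le_mul_of_nonneg_right h1 (by positivity)
    rw [div_mul_cancel₀] at h2
    · linarith
    · positivity
  -- the choice function
  have hstep : ∀ p : M × M, ∃ z : M,
      (p.1 ≠ p.2 → ZAdm ε p.1 p.2 z ∧
        ∀ w, ZAdm ε p.1 p.2 w →
          min (dist p.1 w) (dist w p.2) ≤ 2 * min (dist p.1 z) (dist z p.2)) ∧
      (p.1 = p.2 → z = p.1) := by
    intro p
    by_cases h : p.1 = p.2
    · exact ⟨p.1, fun h' => absurd h h', fun _ => rfl⟩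
    · obtain ⟨z, hz⟩ := exists_nearmax hZ hε hε2 h
      exact ⟨z, fun _ => hz, fun h' => absurd h' h⟩
  choose f hf1 hf2 using hstep
  -- the iterated bisection sequence, obtained as an opaque object
  obtain ⟨P, hP0, hPS⟩ : ∃ P : ℕ → M × M, P 0 = (x, y) ∧ ∀ n, P (n + 1) =
      (if dist x (P n).1 + dist (P n).1 (f (P n)) ≤ d / 2 + δ / 2
        then (f (P n), (P n).2) else ((P n).1, f (P n))) := by
    refine ⟨fun n => (fun p : M × M =>
      if dist x p.1 + dist p.1 (f p) ≤ d / 2 + δ / 2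
        then (f p, p.2) else (p.1, f p))^[n] (x, y), rfl, fun n => ?_⟩
    dsimp only
    rw [Function.iterate_succ_apply']
  -- key step lemma
  have key : ∀ n,
      dist x (P n).1 ≤ d / 2 + δ / 2 →
      dist (P n).2 y ≤ d / 2 + δ / 2 →
      dist x (P n).1 + dist (P n).1 (P n).2 + dist (P n).2 y
        ≤ d + 2 * ε * (d - dist (P n).1 (P n).2) →
      (dist x (P (n+1)).1 ≤ d / 2 + δ / 2 ∧
       dist (P (n+1)).2 y ≤ d / 2 + δ / 2 ∧
       dist x (P (n+1)).1 + dist (P (n+1)).1 (P (n+1)).2 + dist (P (n+1)).2 y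
         ≤ d + 2 * ε * (d - dist (P (n+1)).1 (P (n+1)).2)) ∧
      dist (P n).1 (P (n+1)).1 + dist (P n).2 (P (n+1)).2
        ≤ 2 * (dist (P n).1 (P n).2 - dist (P (n+1)).1 (P (n+1)).2) ∧
      ((P n).1 ≠ (P n).2 → ∀ w, ZAdm ε (P n).1 (P n).2 w →
        min (dist (P n).1 w) (dist w (P n).2)
          ≤ 4 * (dist (P n).1 (P n).2 - dist (P (n+1)).1 (P (n+1)).2)) := by
    intro n I1 I2 I3
    rcases hPab : P n with ⟨a, b⟩
    rw [hPab] at I1 I2 I3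
    rw [hPS n, hPab]
    dsimp only at I1 I2 I3 ⊢
    by_cases hab : a = b
    · -- degenerate case : the pair never moves again
      have hfa : f (a, b) = a := hf2 (a, b) hab
      have hcond : dist x (a, b).1 + dist (a, b).1 (f (a, b)) ≤ d / 2 + δ / 2 := by
        simp only [hfa, dist_self, add_zero]
        exact I1
      rw [if_pos hcond, hfa]
      subst hab
      exact ⟨⟨I1, I2, I3⟩, by simp [dist_self], fun h => absurd rfl h⟩
    · obtain ⟨hAdm, hmax⟩ := hf1 (a, b) hab
      obtain ⟨hza, hzb, hineq⟩ := hAdm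
      have hμ0 : 0 < min (dist a (f (a, b))) (dist (f (a, b)) b) :=
        lt_min (dist_pos.2 (Ne.symm hza)) (dist_pos.2 hzb)
      set z : M := f (a, b) with hz_def
      set s : ℝ := dist a z with hs_def
      set t : ℝ := dist z b with ht_def
      set μ : ℝ := min s t with hμ_def
      have hμs : μ ≤ s := min_le_left _ _
      have hμt : μ ≤ t := min_le_right _ _
      have hs0 : 0 ≤ s := dist_nonneg
      have ht0 : 0 ≤ t := dist_nonneg
      have hμg : μ ≤ dist a b := zadm_min_le_gap hε2 ⟨hza, hzb, hineq⟩
      have hεμ : ε * μ ≤ μ / 2 := by nlinarith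
      by_cases hcond : dist x (a, b).1 + dist (a, b).1 (f (a, b)) ≤ d / 2 + δ / 2
      · rw [if_pos hcond]
        dsimp only at hcond ⊢
        -- P (n+1) = (z, b)
        have hxz : dist x z ≤ dist x a + s := dist_triangle x a z
        have hGt : μ / 2 ≤ dist a b - t := by linarith
        have hp : ε * (μ / 2) ≤ ε * (dist a b - t) :=
          mul_le_mul_of_nonneg_left hGt hε.le
        refine ⟨⟨by linarith, I2, by nlinarith⟩, ?_, fun _ w hw => ?_⟩
        · simp only [dist_self]
          linarith
        · have h := hmax w hw
          linarith
      · rw [if_neg hcond]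
        dsimp only at hcond ⊢
        push_neg at hcond
        -- P (n+1) = (a, z)
        have hzy : dist z y ≤ t + dist b y := by
          have h := dist_triangle z b y
          linarith
        have hGs : μ / 2 ≤ dist a b - s := by linarith
        have hp : ε * (μ / 2) ≤ ε * (dist a b - s) :=
          mul_le_mul_of_nonneg_left hGs hε.le
        have hεg : ε * μ ≤ ε * dist a b :=
          mul_le_mul_of_nonneg_left hμg hε.le
        have hbz : dist b z = t := dist_comm b z
        refine ⟨⟨I1, by nlinarith, by nlinarith⟩, ?_, fun _ w hw => ?_⟩
        · simp only [dist_self]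
          linarith
        · have h := hmax w hw
          linarith
  -- invariants hold along the sequence
  have hInv : ∀ n,
      dist x (P n).1 ≤ d / 2 + δ / 2 ∧
      dist (P n).2 y ≤ d / 2 + δ / 2 ∧
      dist x (P n).1 + dist (P n).1 (P n).2 + dist (P n).2 y
        ≤ d + 2 * ε * (d - dist (P n).1 (P n).2) := by
    intro n
    induction n with
    | zero =>
      rw [hP0]
      dsimp only
      refine ⟨?_, ?_, ?_⟩
      · rw [dist_self]; linarith
      · rw [dist_self]; linarith
      · rw [dist_self, dist_self, ← hd]; nlinarith [hε.le]
    | succ n ih =>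
      exact (key n ih.1 ih.2.1 ih.2.2).1
  set g : ℕ → ℝ := fun n => dist (P n).1 (P n).2 with hg_def
  have hmov : ∀ n, dist (P n).1 (P (n+1)).1 + dist (P n).2 (P (n+1)).2
      ≤ 2 * (g n - g (n + 1)) :=
    fun n => (key n (hInv n).1 (hInv n).2.1 (hInv n).2.2).2.1
  have hgmono : ∀ n, g (n + 1) ≤ g n := by
    intro n
    have h := hmov n
    have h1 : (0:ℝ) ≤ dist (P n).1 (P (n+1)).1 := dist_nonneg
    have h2 : (0:ℝ) ≤ dist (P n).2 (P (n+1)).2 := dist_nonneg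
    linarith
  have hganti : Antitone g := antitone_nat_of_succ_le hgmono
  have hg0 : ∀ n, 0 ≤ g n := fun n => dist_nonneg
  have hsum : ∀ n m, n ≤ m →
      dist (P n).1 (P m).1 + dist (P n).2 (P m).2 ≤ 2 * (g n - g m) := by
    intro n m hnm
    induction m, hnm using Nat.le_induction with
    | base => simp [dist_self]
    | succ m hnm ih =>
      have h1 := hmov m
      have h2 : dist (P n).1 (P (m+1)).1 ≤ dist (P n).1 (P m).1 + dist (P m).1 (P (m+1)).1 :=
        dist_triangle _ _ _
      have h3 : dist (P n).2 (P (m+1)).2 ≤ dist (P n).2 (P m).2 + dist (P m).2 (P (m+1)).2 :=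
        dist_triangle _ _ _
      linarith
  have hbdd : BddBelow (Set.range g) := ⟨0, by rintro _ ⟨n, rfl⟩; exact hg0 n⟩
  set glim : ℝ := ⨅ n, g n with hglim_def
  have hglim : Filter.Tendsto g Filter.atTop (nhds glim) := tendsto_atTop_ciInf hganti hbdd
  have hglim_le : ∀ n, glim ≤ g n := fun n => ciInf_le hbdd n
  have hglim0 : 0 ≤ glim := le_ciInf hg0
  -- both coordinate sequences are Cauchy
  have hcauchy : ∀ s : ℕ → M, (∀ n m, n ≤ m → dist (s n) (s m) ≤ 2 * (g n - g m)) →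
      CauchySeq s := by
    intro s hs
    apply cauchySeq_of_le_tendsto_0 (fun N => 2 * (g N - glim))
    · intro n m N hn hm
      rcases le_total n m with h | h
      · have h1 := hs n m h
        have h2 := hganti hn
        have h3 := hglim_le m
        linarith
      · rw [dist_comm]
        have h1 := hs m n h
        have h2 := hganti hm
        have h3 := hglim_le n
        linarith
    · have h : Filter.Tendsto (fun N => 2 * (g N - glim)) Filter.atTop
          (nhds (2 * (glim - glim))) := (hglim.sub tendsto_const_nhds).const_mul 2
      simpa using h
  have hcA : CauchySeq (fun n => (P n).1) := by
    apply hcauchy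
    intro n m hnm
    have h0 : (0:ℝ) ≤ dist (P n).2 (P m).2 := dist_nonneg
    linarith [hsum n m hnm]
  have hcB : CauchySeq (fun n => (P n).2) := by
    apply hcauchy
    intro n m hnm
    have h0 : (0:ℝ) ≤ dist (P n).1 (P m).1 := dist_nonneg
    linarith [hsum n m hnm]
  obtain ⟨as, haA⟩ := cauchySeq_tendsto_of_complete hcA
  obtain ⟨bs, hbB⟩ := cauchySeq_tendsto_of_complete hcB
  have hgab : Filter.Tendsto g Filter.atTop (nhds (dist as bs)) := haA.dist hbB
  have hglim_eq : dist as bs = glim := tendsto_nhds_unique hgab hglim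
  rcases eq_or_lt_of_le hglim0 with hglim_zero | hglim_pos
  · -- glim = 0 : the common limit is an approximate midpoint
    have habs : as = bs := by
      rw [← dist_eq_zero, hglim_eq, ← hglim_zero]
    refine ⟨as, ?_⟩
    have h1 : dist x as ≤ d / 2 + δ / 2 := by
      have ht : Filter.Tendsto (fun n => dist x (P n).1) Filter.atTop (nhds (dist x as)) :=
        Filter.Tendsto.dist tendsto_const_nhds haA
      exact le_of_tendsto ht (Filter.Eventually.of_forall fun n => (hInv n).1)
    have h2 : dist as y ≤ d / 2 + δ / 2 := by
      rw [habs]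
      have ht : Filter.Tendsto (fun n => dist (P n).2 y) Filter.atTop (nhds (dist bs y)) :=
        Filter.Tendsto.dist hbB tendsto_const_nhds
      exact le_of_tendsto ht (Filter.Eventually.of_forall fun n => (hInv n).2.1)
    rw [max_le_iff]
    exact ⟨by linarith [hd], by linarith [hd]⟩
  · -- glim > 0 : contradiction with property (Z) at the limit pair
    exfalso
    have habs : as ≠ bs := by
      rw [← dist_pos, hglim_eq]
      exact hglim_pos
    obtain ⟨zs, hzsa, hzsb, hzs⟩ := hZ as bs habs (ε / 2) (half_pos hε)
    set ms : ℝ := min (dist as zs) (dist zs bs) with hms_def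
    have hms1 : ms ≤ dist as zs := min_le_left _ _
    have hms2 : ms ≤ dist zs bs := min_le_right _ _
    have hms0 : 0 < ms :=
      lt_min (dist_pos.2 (Ne.symm hzsa)) (dist_pos.2 hzsb)
    have hεms : ε * ms ≤ ms / 2 := by
      have h := mul_le_mul_of_nonneg_right hε2 hms0.le
      linarith
    have hev : ∀ᶠ n in Filter.atTop,
        dist (P n).1 as < ε * ms / 16 ∧ dist (P n).2 bs < ε * ms / 16 := by
      have hpos16 : 0 < ε * ms / 16 := by
        have := mul_pos hε hms0
        linarith
      have h1 := (Metric.tendsto_atTop.1 haA) (ε * ms / 16) hpos16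
      have h2 := (Metric.tendsto_atTop.1 hbB) (ε * ms / 16) hpos16
      obtain ⟨N1, h1⟩ := h1
      obtain ⟨N2, h2⟩ := h2
      refine Filter.eventually_atTop.2 ⟨max N1 N2, fun n hn => ⟨h1 n ?_, h2 n ?_⟩⟩
      · exact le_trans (le_max_left _ _) hn
      · exact le_trans (le_max_right _ _) hn
    obtain ⟨N, hN⟩ := Filter.eventually_atTop.1 hev
    -- for n ≥ N the gap drops by ms/8 at each step
    have hdrop : ∀ n, N ≤ n → g (n + 1) ≤ g n - ms / 8 := by
      intro n hn
      obtain ⟨hA_close, hB_close⟩ := hN n hn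
      have hgn : 0 < g n := lt_of_lt_of_le hglim_pos (hglim_le n)
      have hanbn : (P n).1 ≠ (P n).2 := by
        intro e
        rw [hg_def] at hgn
        simp only [e, dist_self] at hgn
        exact lt_irrefl 0 hgn
      have h1 : ms - ε * ms / 16 ≤ dist (P n).1 zs := by
        have ht : dist as zs ≤ dist as (P n).1 + dist (P n).1 zs := dist_triangle _ _ _
        have hc : dist as (P n).1 = dist (P n).1 as := dist_comm _ _
        linarith
      have h2 : ms - ε * ms / 16 ≤ dist zs (P n).2 := by
        have ht : dist zs bs ≤ dist zs (P n).2 + dist (P n).2 bs := dist_triangle _ _ _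
        linarith
      have hminpos : 0 < ms - ε * ms / 16 := by linarith
      have hmin_lb : ms - ε * ms / 16 ≤ min (dist (P n).1 zs) (dist zs (P n).2) :=
        le_min h1 h2
      have hε2ms : ε * (ε * ms) ≤ (1/2) * (ε * ms) :=
        mul_le_mul_of_nonneg_right hε2 (by positivity)
      have hadm : ZAdm ε (P n).1 (P n).2 zs := by
        refine ⟨?_, ?_, ?_⟩
        · intro e
          rw [← e, dist_self] at h1
          linarith
        · intro e
          rw [← e, dist_self] at h2
          linarith
        · have t1 : dist (P n).1 zs ≤ dist (P n).1 as + dist as zs := dist_triangle _ _ _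
          have t2 : dist zs (P n).2 ≤ dist zs bs + dist bs (P n).2 := dist_triangle _ _ _
          have t3 : dist as bs ≤ dist as (P n).1 + dist (P n).1 (P n).2 + dist (P n).2 bs := by
            have u1 : dist as (P n).2 ≤ dist as (P n).1 + dist (P n).1 (P n).2 :=
              dist_triangle _ _ _
            have u2 : dist as bs ≤ dist as (P n).2 + dist (P n).2 bs := dist_triangle _ _ _
            linarith
          have hc1 : dist as (P n).1 = dist (P n).1 as := dist_comm _ _
          have hc2 : dist bs (P n).2 = dist (P n).2 bs := dist_comm _ _
          have hmin_ε : ε * (ms - ε * ms / 16) ≤ ε * min (dist (P n).1 zs) (dist zs (P n).2) :=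
            mul_le_mul_of_nonneg_left hmin_lb hε.le
          have hεms0 : 0 < ε * ms := mul_pos hε hms0
          linarith [hzs, t1, t2, t3, hc1, hc2, hmin_ε, hε2ms, hA_close, hB_close]
      have h6 := (key n (hInv n).1 (hInv n).2.1 (hInv n).2.2).2.2 hanbn zs hadm
      have h7 : ms / 2 ≤ min (dist (P n).1 zs) (dist zs (P n).2) := by
        have : ε * ms / 16 ≤ ms / 32 := by linarith
        linarith
      have hgg : dist (P n).1 (P n).2 = g n := rfl
      have hgg' : dist (P (n+1)).1 (P (n+1)).2 = g (n+1) := rfl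
      rw [hgg, hgg'] at h6
      linarith
    -- iterate the drop to contradict g ≥ 0
    have hiter : ∀ k : ℕ, g (N + k) ≤ g N - k * (ms / 8) := by
      intro k
      induction k with
      | zero => simp
      | succ k ih =>
        have h := hdrop (N + k) (Nat.le_add_right _ _)
        push_cast
        calc g (N + (k + 1)) = g ((N + k) + 1) := by ring_nf
          _ ≤ g (N + k) - ms / 8 := h
          _ ≤ g N - k * (ms / 8) - ms / 8 := by linarith
          _ = g N - ((k : ℝ) + 1) * (ms / 8) := by ring
    obtain ⟨k, hk⟩ := exists_nat_gt (g N / (ms / 8))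
    have hk' : g N < k * (ms / 8) := by
      rw [div_lt_iff₀ (by positivity)] at hk
      linarith
    have h1 := hiter k
    have h2 := hg0 (N + k)
    linarith

lemma length_to_propertyZ (h : IsLengthSpace M) : PropertyZ M := by
  intro x y hxy ε hε
  set d : ℝ := dist x y with hd
  have hdpos : 0 < d := dist_pos.2 hxy
  set δ : ℝ := min (d / 4) (ε * d / 8) with hδ_def
  have hδ : 0 < δ := lt_min (by positivity) (by positivity)
  have hδ1 : δ ≤ d / 4 := min_le_left _ _
  have hδ2 : δ ≤ ε * d / 8 := min_le_right _ _
  obtain ⟨z, hz⟩ := h x y δ hδ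
  rw [max_le_iff] at hz
  obtain ⟨h1, h2⟩ := hz
  have hd1 : dist x y = d := hd.symm
  have h3 : d - (d / 2 + δ) ≤ dist x z := by
    have ht := dist_triangle x z y
    linarith
  have h4 : d - (d / 2 + δ) ≤ dist z y := by
    have ht := dist_triangle x z y
    linarith
  have hmin : d / 2 - δ ≤ min (dist x z) (dist z y) := le_min (by linarith) (by linarith)
  refine ⟨z, ?_, ?_, ?_⟩
  · intro e
    rw [e, dist_self] at h3
    linarith
  · intro e
    rw [e, dist_self] at h4
    linarith
  · have hεmin : ε * (d / 2 - δ) ≤ ε * min (dist x z) (dist z y) :=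
      mul_le_mul_of_nonneg_left hmin (le_of_lt hε)
    have hq : ε * (d / 4) ≤ ε * (d / 2 - δ) := by nlinarith
    have h2δ : 2 * δ ≤ ε * (d / 4) := by linarith
    linarith

end Aux

/-- A complete metric space is a length space iff it has property (Z). -/
theorem length_iff_propertyZ (M : Type*) [MetricSpace M] [CompleteSpace M] :
    IsLengthSpace M ↔ PropertyZ M :=
  ⟨length_to_propertyZ, propertyZ_to_length⟩
end

section
/- Let M be a complete metric space with property (Z). Then for every x, y ∈ M and all real numbers δ, η with 0 < δ < 1 and 0 < η < 1, there exists z ∈ M such that max(d(x,z), d(z,y)) ≤ d(x,y)/(2(1−η)) + δ. -/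
theorem weakEkeland {X : Type*} [MetricSpace X] [CompleteSpace X]
    (f : X → ℝ) (hf : Continuous f) (h0 : ∀ z, 0 ≤ f z)
    (κ : ℝ) (hκ : 0 < κ) (x0 : X) :
    ∃ v : X, ∀ w : X, f v ≤ f w + κ * dist v w := by
  -- the "improvement set"
  set T : X → Set X := fun u => {w | f w + κ * dist u w ≤ f u} with hT
  have hmemT : ∀ u, u ∈ T u := by intro u; simp [hT]
  have hbddim : ∀ u, BddBelow (f '' T u) := by
    rintro u
    exact ⟨0, by rintro r ⟨w, _, rfl⟩; exact h0 w⟩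
  have hkey : ∀ u : X, ∃ w : X, w ∈ T u ∧ 2 * f w ≤ f u + sInf (f '' T u) := by
    intro u
    have hne : (f '' T u).Nonempty := ⟨f u, u, hmemT u, rfl⟩
    have hinfle : sInf (f '' T u) ≤ f u := csInf_le (hbddim u) ⟨u, hmemT u, rfl⟩
    rcases lt_or_eq_of_le hinfle with h | h
    · have h2 : sInf (f '' T u) < (f u + sInf (f '' T u)) / 2 := by linarith
      obtain ⟨r, ⟨w, hw, rfl⟩, hr⟩ := exists_lt_of_csInf_lt hne h2
      exact ⟨w, hw, by linarith⟩
    · exact ⟨u, hmemT u, by linarith⟩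
  choose next hnextT hnextInf using hkey
  set seq : ℕ → X := fun n => next^[n] x0 with hseq
  have hsucc : ∀ n, seq (n + 1) = next (seq n) := by
    intro n; simp [hseq, Function.iterate_succ_apply']
  have hP1 : ∀ n, f (seq (n+1)) + κ * dist (seq n) (seq (n+1)) ≤ f (seq n) := by
    intro n; rw [hsucc n]; exact hnextT (seq n)
  have hanti : ∀ n m, n ≤ m → κ * dist (seq n) (seq m) ≤ f (seq n) - f (seq m) := by
    intro n m hnm
    induction m, hnm using Nat.le_induction with
    | base => simp
    | succ m hnm ih =>
      have h1 := hP1 m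
      have h2 : κ * dist (seq n) (seq (m+1)) ≤
          κ * dist (seq n) (seq m) + κ * dist (seq m) (seq (m+1)) := by
        rw [← mul_add]
        exact mul_le_mul_of_nonneg_left (dist_triangle _ _ _) hκ.le
      linarith
  have hfanti : ∀ n m, n ≤ m → f (seq m) ≤ f (seq n) := by
    intro n m hnm
    have := hanti n m hnm
    nlinarith [dist_nonneg (x := seq n) (y := seq m)]
  have hbdd : BddBelow (Set.range fun n => f (seq n)) := by
    exact ⟨0, by rintro r ⟨n, rfl⟩; exact h0 _⟩
  set L : ℝ := ⨅ n, f (seq n) with hLdef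
  have hLle : ∀ n, L ≤ f (seq n) := fun n => ciInf_le hbdd n
  have hL : Filter.Tendsto (fun n => f (seq n)) Filter.atTop (nhds L) := by
    apply tendsto_atTop_ciInf _ hbdd
    intro n m hnm
    exact hfanti n m hnm
  have hcauchy : CauchySeq seq := by
    apply cauchySeq_of_le_tendsto_0 (fun N => (f (seq N) - L) / κ)
    · intro n m N hn hm
      rcases le_total n m with h | h
      · rw [le_div_iff₀ hκ]
        have := hanti n m h
        have := hfanti N n hn
        have := hLle m
        nlinarith
      · rw [dist_comm, le_div_iff₀ hκ]
        have := hanti m n h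
        have := hfanti N m hm
        have := hLle n
        nlinarith
    · have : Filter.Tendsto (fun N => (f (seq N) - L) / κ) Filter.atTop
          (nhds ((L - L) / κ)) := ((hL.sub tendsto_const_nhds).div_const κ)
      simpa using this
  obtain ⟨v, hv⟩ := cauchySeq_tendsto_of_complete hcauchy
  have hfv : f v = L := by
    have h1 : Filter.Tendsto (fun n => f (seq n)) Filter.atTop (nhds (f v)) :=
      (hf.continuousAt.tendsto).comp hv
    exact tendsto_nhds_unique h1 hL
  have hdistv : ∀ n, κ * dist (seq n) v ≤ f (seq n) - L := by
    intro n
    have h1 : Filter.Tendsto (fun m => κ * dist (seq n) (seq m)) Filter.atTop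
        (nhds (κ * dist (seq n) v)) :=
      (tendsto_const_nhds.dist hv).const_mul κ
    have h2 : Filter.Tendsto (fun m => f (seq n) - f (seq m)) Filter.atTop
        (nhds (f (seq n) - L)) := tendsto_const_nhds.sub hL
    refine le_of_tendsto_of_tendsto h1 h2 ?_
    filter_upwards [Filter.eventually_ge_atTop n] with m hm
    exact hanti n m hm
  refine ⟨v, ?_⟩
  intro w
  by_contra hcon
  push_neg at hcon
  rw [hfv] at hcon
  -- w is in every T (seq n)
  have hwT : ∀ n, w ∈ T (seq n) := by
    intro n
    have h1 : dist (seq n) w ≤ dist (seq n) v + dist v w := dist_triangle _ _ _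
    have h2 := hdistv n
    simp only [hT, Set.mem_setOf_eq]
    nlinarith
  have hstep : ∀ n, 2 * f (seq (n+1)) ≤ f (seq n) + f w := by
    intro n
    have h1 : sInf (f '' T (seq n)) ≤ f w := csInf_le (hbddim _) ⟨w, hwT n, rfl⟩
    have h2 := hnextInf (seq n)
    rw [← hsucc n] at h2
    linarith
  have hlim : 2 * L ≤ L + f w := by
    have h1 : Filter.Tendsto (fun n => 2 * f (seq (n+1))) Filter.atTop (nhds (2 * L)) := by
      exact ((hL.comp (Filter.tendsto_add_atTop_nat 1)).const_mul 2)
    have h2 : Filter.Tendsto (fun _ : ℕ => f (seq 0) + f w) Filter.atTop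
        (nhds (f (seq 0) + f w)) := tendsto_const_nhds
    -- instead take limit of hstep directly
    have h3 : Filter.Tendsto (fun n => f (seq n) + f w) Filter.atTop (nhds (L + f w)) :=
      hL.add tendsto_const_nhds
    exact le_of_tendsto_of_tendsto' h1 h3 hstep
  nlinarith [dist_nonneg (x := v) (y := w)]


/-- In a complete metric space with property (Z), for all `x, y` and
`0 < δ < 1`, `0 < η < 1` there is `z` with
`max (d(x,z)) (d(z,y)) ≤ d(x,y)/(2(1-η)) + δ`. -/
theorem propertyZ_midpoint_estimate (M : Type*) [MetricSpace M] [CompleteSpace M]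
    (hZ : ∀ x y : M, x ≠ y → ∀ ε : ℝ, 0 < ε →
      ∃ z : M, z ≠ x ∧ z ≠ y ∧
        dist x z + dist z y ≤ dist x y + ε * min (dist x z) (dist z y))
    (x y : M) (δ η : ℝ) (hδ0 : 0 < δ) (hδ1 : δ < 1) (hη0 : 0 < η) (hη1 : η < 1) :
    ∃ z : M, max (dist x z) (dist z y) ≤ dist x y / (2 * (1 - η)) + δ := by
  have h1η : (0:ℝ) < 1 - η := by linarith
  -- the constraint set
  set S : Set (M × M × ℝ × ℝ) := {u | dist x u.1 ≤ u.2.2.1 ∧ dist u.2.1 y ≤ u.2.2.2 ∧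
      (1 - η) * (u.2.2.1 + u.2.2.2) + dist u.1 u.2.1 ≤ dist x y ∧
      |u.2.2.1 - u.2.2.2| ≤ dist u.1 u.2.1} with hS
  have hSclosed : IsClosed S := by
    rw [hS]
    have e1 : IsClosed {u : M × M × ℝ × ℝ | dist x u.1 ≤ u.2.2.1} := by
      refine isClosed_le ?_ ?_ <;> fun_prop
    have e2 : IsClosed {u : M × M × ℝ × ℝ | dist u.2.1 y ≤ u.2.2.2} := by
      refine isClosed_le ?_ ?_ <;> fun_prop
    have e3 : IsClosed {u : M × M × ℝ × ℝ |
        (1 - η) * (u.2.2.1 + u.2.2.2) + dist u.1 u.2.1 ≤ dist x y} := by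
      refine isClosed_le ?_ ?_ <;> fun_prop
    have e4 : IsClosed {u : M × M × ℝ × ℝ | |u.2.2.1 - u.2.2.2| ≤ dist u.1 u.2.1} := by
      refine isClosed_le ?_ ?_ <;> fun_prop
    exact e1.inter (e2.inter (e3.inter e4))
  have hu0 : ((x, y, 0, 0) : M × M × ℝ × ℝ) ∈ S := by
    refine ⟨by simp, by simp, by simp, by simpa using dist_nonneg⟩
  haveI : CompleteSpace S := hSclosed.completeSpace_coe
  set f : S → ℝ := fun u => dist u.1.1 u.1.2.1 with hf
  have hfc : Continuous f := by
    apply Continuous.dist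
    · exact continuous_fst.comp continuous_subtype_val
    · exact continuous_fst.comp (continuous_snd.comp continuous_subtype_val)
  obtain ⟨v, hv⟩ := weakEkeland f hfc (fun z => dist_nonneg) ((1 - η)/2) (by linarith)
    ⟨(x, y, 0, 0), hu0⟩
  obtain ⟨⟨p, q, A, B⟩, hmem⟩ := v
  obtain ⟨h1, h2, h3, h4⟩ := hmem
  simp only [hf] at hv h1 h2 h3 h4
  by_cases hpq : p = q
  · -- done: p is the desired point
    subst hpq
    rw [dist_self] at h3 h4
    have hAB : A = B := by
      have := sub_eq_zero.mp (abs_nonpos_iff.mp h4)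
      linarith
    have hA : A ≤ dist x y / (2 * (1 - η)) := by
      rw [le_div_iff₀ (by linarith)]
      nlinarith
    refine ⟨p, max_le ?_ ?_⟩
    · linarith [h1]
    · linarith [h2, hAB]
  · -- contradiction with Ekeland point
    exfalso
    obtain ⟨z, hz1, hz2, hzi⟩ := hZ p q hpq η hη0
    have hs : 0 < dist p z := dist_pos.mpr (Ne.symm hz1)
    have ht : 0 < dist z q := dist_pos.mpr hz2
    have htri : dist p q ≤ dist p z + dist z q := dist_triangle p z q
    have hmin1 : η * min (dist p z) (dist z q) ≤ η * dist p z :=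
      mul_le_mul_of_nonneg_left (min_le_left _ _) hη0.le
    have hmin2 : η * min (dist p z) (dist z q) ≤ η * dist z q :=
      mul_le_mul_of_nonneg_left (min_le_right _ _) hη0.le
    have hts : dist z q ≤ dist p q - (1 - η) * dist p z := by nlinarith
    have hst : dist p z ≤ dist p q - (1 - η) * dist z q := by nlinarith
    have habs := abs_le.mp h4
    rcases le_or_gt (A - B) (dist z q - dist p z) with hcase | hcase
    · -- move p to z
      have hwS : ((z, q, A + dist p z, B) : M × M × ℝ × ℝ) ∈ S := by
        refine ⟨?_, h2, ?_, ?_⟩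
        · have := dist_triangle x p z
          simpa using by linarith
        · show (1 - η) * ((A + dist p z) + B) + dist z q ≤ dist x y
          nlinarith
        · show |A + dist p z - B| ≤ dist z q
          rw [abs_le]
          exact ⟨by linarith [habs.1], by linarith⟩
      have hek := hv ⟨(z, q, A + dist p z, B), hwS⟩
      simp only [hf, Subtype.dist_eq, Prod.dist_eq, Real.dist_eq, dist_self,
        sub_self, abs_zero] at hek
      have he1 : |A - (A + dist p z)| = dist p z := by
        rw [show A - (A + dist p z) = -dist p z by ring, abs_neg, abs_of_nonneg hs.le]
      rw [he1] at hek
      have he2 : max (dist p z) (max (0:ℝ) (max (dist p z) 0)) = dist p z := by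
        rw [max_eq_left hs.le, max_eq_right hs.le, max_self]
      rw [he2] at hek
      nlinarith [mul_pos h1η hs]
    · -- move q to z
      have hwS : ((p, z, A, B + dist z q) : M × M × ℝ × ℝ) ∈ S := by
        refine ⟨h1, ?_, ?_, ?_⟩
        · have := dist_triangle z q y
          simpa using by linarith
        · show (1 - η) * (A + (B + dist z q)) + dist p z ≤ dist x y
          nlinarith
        · show |A - (B + dist z q)| ≤ dist p z
          rw [abs_le]
          exact ⟨by linarith, by linarith [habs.2]⟩
      have hek := hv ⟨(p, z, A, B + dist z q), hwS⟩
      simp only [hf, Subtype.dist_eq, Prod.dist_eq, Real.dist_eq, dist_self,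
        sub_self, abs_zero] at hek
      have he0 : dist q z = dist z q := dist_comm q z
      rw [he0] at hek
      have he1 : |B - (B + dist z q)| = dist z q := by
        rw [show B - (B + dist z q) = -dist z q by ring, abs_neg, abs_of_nonneg ht.le]
      rw [he1] at hek
      have he2 : max (0:ℝ) (max (dist z q) (max (0:ℝ) (dist z q))) = dist z q := by
        rw [max_eq_right ht.le, max_self, max_eq_right ht.le]
      rw [he2] at hek
      nlinarith [mul_pos h1η ht]
end

section
/- Let α be a countable limit ordinal and let {x_γ : γ < α} be a transfinite sequence of points in a complete metric space M such that for every limit ordinal β < α the sequence {x_γ : γ < β} converges to x_β. Suppose that Σ_{γ < α} d(x_γ, x_{γ+1}) < +∞ (i.e., the family of consecutive distances is summable). Then {x_γ : γ < α} converges to a point x ∈ M, and moreover d(x_0, x) ≤ Σ_{γ < α} d(x_γ, x_{γ+1}). -/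
/-!
By transfinite induction on `γ` (triangle inequality at successors, the continuity hypothesis at
limits), `d(x_β, x_γ) ≤ ∑_{β ≤ δ < γ} d(x_δ, x_{δ+1})` for `β ≤ γ < α`. Summability makes the
tails `∑_{β < δ < α}` small, so `x` maps the filter of left neighbourhoods of `α` to a Cauchy
filter, which converges in the complete space `M`; the bound for `d(x_0, x_γ)` passes to the limit.
-/

open Ordinal Filter Topology Set Order

theorem Summable.tsum_subtype_mono {ι : Type*} {g : ι → ℝ} (hg : Summable g) (hg0 : 0 ≤ g)
    {s t : Set ι} (hst : s ⊆ t) : ∑' i : s, g i ≤ ∑' i : t, g i := by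
  rw [tsum_subtype, tsum_subtype]
  exact (hg.indicator s).tsum_le_tsum (indicator_le_indicator_of_subset hst hg0) (hg.indicator t)

theorem Summable.exists_tsum_Ioo_lt {ι : Type*} [LinearOrder ι] [OrderBot ι] {g : ι → ℝ}
    (hg : Summable g) (hg0 : 0 ≤ g) {a : ι} (ha : ⊥ < a) {ε : ℝ} (hε : 0 < ε) :
    ∃ b < a, ∑' i : Ioo b a, g i < ε := by
  obtain ⟨F, hF⟩ := ((tendsto_order.1 (tendsto_tsum_compl_atTop_zero g)).2 ε hε).exists
  refine ⟨(F.filter (· < a)).sup id, Finset.sup_lt_iff ha |>.2 fun b hb => ?_, ?_⟩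
  · exact (Finset.mem_filter.1 hb).2
  · refine lt_of_le_of_lt (hg.tsum_subtype_mono hg0 (t := {i | i ∉ F}) fun i hi hiF => ?_) hF
    exact hi.1.not_ge (Finset.le_sup (f := id) (Finset.mem_filter.2 ⟨hiF, hi.2⟩))

theorem nhdsLT_neBot_of_isSuccLimit {ι : Type*} [LinearOrder ι] [TopologicalSpace ι]
    [OrderTopology ι] {a : ι} (ha : IsSuccLimit a) : (𝓝[<] a).NeBot :=
  (nhdsLT_basis_of_exists_lt (not_isMin_iff.1 ha.not_isMin)).neBot_iff.2 fun hb =>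
    (not_covBy_iff hb).1 (ha.isSuccPrelimit _)

theorem tendsto_nhdsLT_iff_dist {ι M : Type*} [LinearOrder ι] [TopologicalSpace ι]
    [OrderTopology ι] [PseudoMetricSpace M] {a : ι} (ha : ¬IsMin a) {f : ι → M} {l : M} :
    Tendsto f (𝓝[<] a) (𝓝 l) ↔
      ∀ ε > 0, ∃ b < a, ∀ c, b < c → c < a → dist (f c) l < ε := by
  simp [(nhdsLT_basis_of_exists_lt (not_isMin_iff.1 ha)).tendsto_iff Metric.nhds_basis_ball]

section TransfiniteSequence

variable {M : Type*} [PseudoMetricSpace M] {x : Ordinal → M} {g : Ordinal → ℝ} {α : Ordinal}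

theorem dist_le_tsum_Ico (hg : Summable g) (hg0 : 0 ≤ g)
    (hstep : ∀ δ < α, dist (x δ) (x (δ + 1)) ≤ g δ)
    (hlimit : ∀ β < α, IsSuccLimit β → Tendsto x (𝓝[<] β) (𝓝 (x β)))
    {β γ : Ordinal} (hβγ : β ≤ γ) (hγα : γ < α) :
    dist (x β) (x γ) ≤ ∑' δ : Ico β γ, g δ := by
  induction γ using Ordinal.limitRecOn generalizing β with
  | zero => simp [nonpos_iff_eq_zero.1 hβγ]
  | add_one a ih =>
    rcases hβγ.eq_or_lt with rfl | hβa
    · simp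
    have hβa : β ≤ a := Order.lt_add_one_iff.1 hβa
    have haα : a < α := (Order.lt_add_one_iff.2 le_rfl).trans hγα
    have hIco : Ico β (a + 1) = Ico β a ∪ {a} := by
      rw [Ico_add_one_right_eq_Icc, ← Ico_insert_right hβa, insert_eq, union_comm]
    calc dist (x β) (x (a + 1)) ≤ dist (x β) (x a) + dist (x a) (x (a + 1)) := dist_triangle ..
      _ ≤ (∑' δ : Ico β a, g δ) + g a := add_le_add (ih hβa haα) (hstep a haα)
      _ = ∑' δ : Ico β (a + 1), g δ := by
        rw [hIco, (hg.subtype _).tsum_union_disjoint (by simp) (hg.subtype _), tsum_singleton]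
  | limit γ hγ ih =>
    rcases hβγ.eq_or_lt with rfl | hβγ
    · simp
    have := nhdsLT_neBot_of_isSuccLimit hγ
    refine le_of_tendsto (tendsto_const_nhds.dist (hlimit γ hγα hγ)) ?_
    filter_upwards [Ioo_mem_nhdsLT hβγ] with δ hδ
    exact (ih δ hδ.2 hδ.1.le (hδ.2.trans hγα)).trans
      (hg.tsum_subtype_mono hg0 (Ico_subset_Ico_right hδ.2.le))

theorem cauchy_map_nhdsLT (hg : Summable g) (hg0 : 0 ≤ g) (hα : IsSuccLimit α)
    (hstep : ∀ δ < α, dist (x δ) (x (δ + 1)) ≤ g δ)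
    (hlimit : ∀ β < α, IsSuccLimit β → Tendsto x (𝓝[<] β) (𝓝 (x β))) :
    Cauchy (map x (𝓝[<] α)) := by
  have := nhdsLT_neBot_of_isSuccLimit hα
  refine Metric.cauchy_iff.2 ⟨inferInstance, fun ε hε => ?_⟩
  obtain ⟨β, hβα, hβ⟩ := hg.exists_tsum_Ioo_lt hg0 hα.bot_lt hε
  have hsmall : ∀ γ ∈ Ioo β α, ∀ δ ∈ Ioo β α, γ ≤ δ → dist (x γ) (x δ) < ε :=
    fun γ hγ δ hδ hγδ => (dist_le_tsum_Ico hg hg0 hstep hlimit hγδ hδ.2).trans_lt <|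
      (hg.tsum_subtype_mono hg0 <| (Ico_subset_Ioo_left hγ.1).trans
        (Ioo_subset_Ioo_right hδ.2.le)).trans_lt hβ
  refine ⟨x '' Ioo β α, image_mem_map (Ioo_mem_nhdsLT hβα), ?_⟩
  rintro _ ⟨γ, hγ, rfl⟩ _ ⟨δ, hδ, rfl⟩
  rcases le_total γ δ with hγδ | hδγ
  · exact hsmall γ hγ δ hδ hγδ
  · exact dist_comm (x γ) (x δ) ▸ hsmall δ hδ γ hγ hδγ

end TransfiniteSequence

theorem transfinite_summable_converges_general (M : Type*) [MetricSpace M] [CompleteSpace M]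
    (α : Ordinal) (hlim : Order.IsSuccLimit α)
    (x : Ordinal → M)
    (hconv : ∀ β : Ordinal, β < α → Order.IsSuccLimit β →
      ∀ ε : ℝ, 0 < ε → ∃ β' < β, ∀ γ : Ordinal,
        β' < γ → γ < β → dist (x γ) (x β) < ε)
    (hsum : Summable fun γ : Set.Iio α => dist (x γ.1) (x (γ.1 + 1))) :
    ∃ l : M,
      (∀ ε : ℝ, 0 < ε → ∃ β < α, ∀ γ : Ordinal,
        β < γ → γ < α → dist (x γ) l < ε) ∧
      dist (x 0) l ≤ ∑' γ : Set.Iio α, dist (x γ.1) (x (γ.1 + 1)) := by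
  set g := (Iio α).indicator fun δ => dist (x δ) (x (δ + 1)) with hg_def
  have hg : Summable g := summable_subtype_iff_indicator.1 hsum
  have hg0 : 0 ≤ g := indicator_nonneg fun _ _ => dist_nonneg
  have hstep : ∀ δ < α, dist (x δ) (x (δ + 1)) ≤ g δ := fun δ hδ => by
    rw [hg_def, indicator_of_mem (mem_Iio.2 hδ)]
  have hlimit : ∀ β < α, IsSuccLimit β → Tendsto x (𝓝[<] β) (𝓝 (x β)) := fun β hβα hβ =>
    (tendsto_nhdsLT_iff_dist hβ.not_isMin).2 (hconv β hβα hβ)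
  obtain ⟨l, hl⟩ := CompleteSpace.complete (cauchy_map_nhdsLT hg hg0 hlim hstep hlimit)
  refine ⟨l, (tendsto_nhdsLT_iff_dist hlim.not_isMin).1 hl, ?_⟩
  have := nhdsLT_neBot_of_isSuccLimit hlim
  refine le_of_tendsto (tendsto_const_nhds.dist hl) ?_
  filter_upwards [self_mem_nhdsWithin] with γ hγ
  exact (dist_le_tsum_Ico hg hg0 hstep hlimit zero_le hγ).trans
    ((hg.tsum_subtype_mono hg0 fun δ hδ => hδ.2.trans hγ).trans_eq
      (tsum_congr fun δ : Iio α => indicator_of_mem δ.2 _))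

/-- If `{x_γ : γ < α}` (α a countable limit ordinal) is a transfinite sequence
in a complete metric space such that `{x_γ : γ < β}` converges to `x_β` for
every limit `β < α`, and the consecutive distances are summable, then the
sequence converges to some `l` with `d(x_0, l) ≤ ∑_{γ<α} d(x_γ, x_{γ+1})`. -/
theorem transfinite_summable_converges (M : Type*) [MetricSpace M] [CompleteSpace M]
    (α : Ordinal) (hlim : Order.IsSuccLimit α) (hcount : α.card ≤ Cardinal.aleph0)
    (x : Ordinal → M)
    (hconv : ∀ β : Ordinal, β < α → Order.IsSuccLimit β →
      ∀ ε : ℝ, 0 < ε → ∃ β' < β, ∀ γ : Ordinal,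
        β' < γ → γ < β → dist (x γ) (x β) < ε)
    (hsum : Summable fun γ : Set.Iio α => dist (x γ.1) (x (γ.1 + 1))) :
    ∃ l : M,
      (∀ ε : ℝ, 0 < ε → ∃ β < α, ∀ γ : Ordinal,
        β < γ → γ < α → dist (x γ) l < ε) ∧
      dist (x 0) l ≤ ∑' γ : Set.Iio α, dist (x γ.1) (x (γ.1 + 1)) :=
  transfinite_summable_converges_general M α hlim x hconv hsum
end
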